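/- Let X∘ be a symmetric solution of CGDARE(Σ) and let ν be the nilpotency index of A_{X∘}, i.e., the smallest integer k ≥ 0 such that ker (A_{X∘})^k = ker (A_{X∘})^{k+1}. Let T ≥ 1, let P = Pᵀ ≥ 0, and let X_T = P, X_t = ℛ(X_{t+1}) for 0 ≤ t ≤ T−1 be the solution of the generalised Riccati difference equation; assume each X_t is symmetric and satisfies ker R_{X_t} ⊆ ker S_{X_t} (which holds in particular when every X_t is positive semidefinite). Then for every integer τ with ν ≤ τ ≤ T, (X_{T−τ} − X∘) u = 0 for all u ∈ 𝒰 := ker (A_{X∘})^n. -/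

import Mathlib

open Matrix

-- The Moore–Penrose pseudoinverse of a real matrix, characterised by the four
-- Penrose equations (it exists and is unique for every real matrix).
open Classical in
noncomputable def mpinv {α β : Type*} [Fintype α] [Fintype β]
    (M : Matrix α β ℝ) : Matrix β α ℝ :=
  if h : ∃ P : Matrix β α ℝ,
      M * P * M = M ∧ P * M * P = P ∧ (M * P)ᵀ = M * P ∧ (P * M)ᵀ = P * M
  then h.choose else 0

/-- `R_X = R + BᵀXB`. -/
noncomputable def RX {ι κ : Type*} [Fintype ι] [Fintype κ]
    (R : Matrix κ κ ℝ) (B : Matrix ι κ ℝ) (X : Matrix ι ι ℝ) : Matrix κ κ ℝ :=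
  R + Bᵀ * X * B

/-- `S_X = AᵀXB + S`. -/
noncomputable def SX {ι κ : Type*} [Fintype ι] [Fintype κ]
    (A : Matrix ι ι ℝ) (B S : Matrix ι κ ℝ) (X : Matrix ι ι ℝ) : Matrix ι κ ℝ :=
  Aᵀ * X * B + S

/-- `K_X = R_X† S_Xᵀ`. -/
noncomputable def KX {ι κ : Type*} [Fintype ι] [Fintype κ]
    (A : Matrix ι ι ℝ) (B S : Matrix ι κ ℝ) (R : Matrix κ κ ℝ) (X : Matrix ι ι ℝ) :
    Matrix κ ι ℝ :=
  mpinv (RX R B X) * (SX A B S X)ᵀ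

/-- The closed-loop matrix `A_X = A - B K_X`. -/
noncomputable def AX {ι κ : Type*} [Fintype ι] [Fintype κ]
    (A : Matrix ι ι ℝ) (B S : Matrix ι κ ℝ) (R : Matrix κ κ ℝ) (X : Matrix ι ι ℝ) :
    Matrix ι ι ℝ :=
  A - B * KX A B S R X

/-- The kernel condition `ker R_X ⊆ ker S_X`. -/
def KerCond {ι κ : Type*} [Fintype ι] [Fintype κ]
    (A : Matrix ι ι ℝ) (B S : Matrix ι κ ℝ) (R : Matrix κ κ ℝ) (X : Matrix ι ι ℝ) : Prop :=
  ∀ v : κ → ℝ, (RX R B X).mulVec v = 0 → (SX A B S X).mulVec v = 0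

/-- The Riccati operator `𝔇(X) = X - AᵀXA + S_X R_X† S_Xᵀ - Q`. -/
noncomputable def DOp {ι κ : Type*} [Fintype ι] [Fintype κ]
    (A Q : Matrix ι ι ℝ) (B S : Matrix ι κ ℝ) (R : Matrix κ κ ℝ) (X : Matrix ι ι ℝ) :
    Matrix ι ι ℝ :=
  X - Aᵀ * X * A + SX A B S X * mpinv (RX R B X) * (SX A B S X)ᵀ - Q

/-- The Riccati map `ℛ(X) = AᵀXA - S_X R_X† S_Xᵀ + Q`. -/
noncomputable def Ricc {ι κ : Type*} [Fintype ι] [Fintype κ]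
    (A Q : Matrix ι ι ℝ) (B S : Matrix ι κ ℝ) (R : Matrix κ κ ℝ) (X : Matrix ι ι ℝ) :
    Matrix ι ι ℝ :=
  Aᵀ * X * A - SX A B S X * mpinv (RX R B X) * (SX A B S X)ᵀ + Q

/-- `X` is a symmetric solution of CGDARE(Σ): it is symmetric, satisfies the GDARE and
the kernel condition `ker R_X ⊆ ker S_X`. -/
def IsCGDARESolution {ι κ : Type*} [Fintype ι] [Fintype κ]
    (A Q : Matrix ι ι ℝ) (B S : Matrix ι κ ℝ) (R : Matrix κ κ ℝ) (X : Matrix ι ι ℝ) : Prop :=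
  Xᵀ = X ∧ X = Ricc A Q B S R X ∧ KerCond A B S R X

/-- The matrix `N = [[A, 0, B], [Q, -I, S], [Sᵀ, 0, R]]` of the extended symplectic pencil. -/
noncomputable def Nmat {n m : ℕ} (A Q : Matrix (Fin n) (Fin n) ℝ)
    (B S : Matrix (Fin n) (Fin m) ℝ) (R : Matrix (Fin m) (Fin m) ℝ) :
    Matrix (Fin n ⊕ (Fin n ⊕ Fin m)) (Fin n ⊕ (Fin n ⊕ Fin m)) ℝ :=
  fromBlocks A (fromCols 0 B) (fromRows Q Sᵀ) (fromBlocks (-1) S 0 R)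

/-- The matrix `M = [[I, 0, 0], [0, -Aᵀ, 0], [0, -Bᵀ, 0]]` of the extended symplectic pencil. -/
noncomputable def Mmat {n m : ℕ} (A : Matrix (Fin n) (Fin n) ℝ)
    (B : Matrix (Fin n) (Fin m) ℝ) :
    Matrix (Fin n ⊕ (Fin n ⊕ Fin m)) (Fin n ⊕ (Fin n ⊕ Fin m)) ℝ :=
  fromBlocks 1 0 0 (fromBlocks (-Aᵀ) 0 (-Bᵀ) 0)

/-!
Subtracting the Riccati map at two symmetric matrices satisfying the kernel condition gives
`ℛ(X) - ℛ(Y) = A_Xᵀ (X - Y) A_Y`. Running the difference equation backwards from `X_T`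
against the fixed point `X∘` therefore yields
`X_{T-τ} - X∘ = A_{X_{T-τ+1}}ᵀ ⋯ A_{X_T}ᵀ (X_T - X∘) A_{X∘}^τ`, which vanishes on
`ker A_{X∘}^τ`. Once `τ ≥ ν` this kernel has stabilised, so it equals `ker A_{X∘}^n`.
-/

section PenroseInverse

variable {α β : Type*} [Fintype α] [Fintype β]

def IsPenroseInverse (M : Matrix α β ℝ) (P : Matrix β α ℝ) : Prop :=
  M * P * M = M ∧ P * M * P = P ∧ (M * P)ᵀ = M * P ∧ (P * M)ᵀ = P * M

theorem IsPenroseInverse.unique {M : Matrix α β ℝ} {P P' : Matrix β α ℝ}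
    (h : IsPenroseInverse M P) (h' : IsPenroseInverse M P') : P = P' := by
  obtain ⟨h1, h2, h3, h4⟩ := h
  obtain ⟨h1', h2', h3', h4'⟩ := h'
  have hMP : M * P = M * P' :=
    calc M * P = (M * P' * M) * P := by rw [h1']
    _ = (M * P')ᵀ * (M * P)ᵀ := by rw [h3, h3']; simp only [Matrix.mul_assoc]
    _ = (M * P * M * P')ᵀ := by rw [← transpose_mul]; simp only [Matrix.mul_assoc]
    _ = M * P' := by rw [h1, h3']
  have hPM : P * M = P' * M :=
    calc P * M = P * (M * P' * M) := by rw [h1']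
    _ = (P * M)ᵀ * (P' * M)ᵀ := by rw [h4, h4']; simp only [Matrix.mul_assoc]
    _ = (P' * (M * P * M))ᵀ := by rw [← transpose_mul]; simp only [Matrix.mul_assoc]
    _ = P' * M := by rw [h1, h4']
  calc P = P * M * P := h2.symm
  _ = P' := by rw [hPM, Matrix.mul_assoc, hMP, ← Matrix.mul_assoc, h2']

theorem mpinv_eq_of_isPenroseInverse {M : Matrix α β ℝ} {P : Matrix β α ℝ}
    (h : IsPenroseInverse M P) : mpinv M = P := by
  unfold mpinv
  split_ifs with hex
  · exact IsPenroseInverse.unique hex.choose_spec h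
  · exact absurd ⟨P, h⟩ hex

end PenroseInverse

section SymmetricPenroseInverse

variable {α : Type*} [Fintype α] [DecidableEq α] {M : Matrix α α ℝ}

/-- With the convention `0⁻¹ = 0`, the scalar map `x ↦ x⁻¹` is the Penrose inverse on `ℝ`;
applying it through the functional calculus gives the Penrose inverse of a symmetric matrix. -/
theorem exists_isPenroseInverse_isSymm (hM : M.IsSymm) :
    ∃ P, IsPenroseInverse M P ∧ P.IsSymm := by
  have hsa : IsSelfAdjoint M := isHermitian_iff_isSymm.mpr hM
  have hcont (f : ℝ → ℝ) : ContinuousOn f (spectrum ℝ M) :=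
    finite_real_spectrum.continuousOn f
  have hmul (f g : ℝ → ℝ) : cfc f M * cfc g M = cfc (fun x => f x * g x) M :=
    (cfc_mul f g M (hcont f) (hcont g)).symm
  have hsymm (f : ℝ → ℝ) : (cfc f M).IsSymm :=
    isHermitian_iff_isSymm.mp (cfc_predicate f M)
  have hmul_left (g : ℝ → ℝ) : M * cfc g M = cfc (fun x => x * g x) M := by
    simpa only [cfc_id' ℝ M] using hmul (fun x => x) g
  have hmul_right (f : ℝ → ℝ) : cfc f M * M = cfc (fun x => f x * x) M := by
    simpa only [cfc_id' ℝ M] using hmul f (fun x => x)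
  refine ⟨cfc (·⁻¹ : ℝ → ℝ) M, ⟨?_, ?_, ?_, ?_⟩, hsymm _⟩
  · rw [hmul_left, hmul_right]
    simp only [mul_inv_mul_cancel, cfc_id' ℝ M]
  · rw [hmul_right, hmul]
    congr 1 with x
    simpa only [inv_inv] using mul_inv_mul_cancel x⁻¹
  · rw [hmul_left]; exact hsymm _
  · rw [hmul_right]; exact hsymm _

theorem Matrix.IsSymm.isSymm_mpinv (hM : M.IsSymm) : (mpinv M).IsSymm := by
  obtain ⟨P, hP, hPsymm⟩ := exists_isPenroseInverse_isSymm hM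
  rwa [mpinv_eq_of_isPenroseInverse hP]

theorem Matrix.IsSymm.mul_mpinv_mul_self (hM : M.IsSymm) : M * mpinv M * M = M := by
  obtain ⟨P, hP, -⟩ := exists_isPenroseInverse_isSymm hM
  rw [mpinv_eq_of_isPenroseInverse hP]
  exact hP.1

end SymmetricPenroseInverse

section Riccati

variable {ι κ : Type*} [Fintype ι] [Fintype κ]
  {A Q : Matrix ι ι ℝ} {B S : Matrix ι κ ℝ} {R : Matrix κ κ ℝ} {X Y : Matrix ι ι ℝ}

theorem isSymm_RX (hR : R.IsSymm) (hX : X.IsSymm) : (RX R B X).IsSymm := by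
  rw [IsSymm, RX, transpose_add, transpose_mul, transpose_mul, transpose_transpose,
    hR.eq, hX.eq, Matrix.mul_assoc]

theorem SX_sub_SX : SX A B S X - SX A B S Y = Aᵀ * (X - Y) * B := by
  rw [SX, SX, Matrix.mul_sub, Matrix.sub_mul]
  abel

theorem RX_sub_RX : RX R B X - RX R B Y = Bᵀ * (X - Y) * B := by
  rw [RX, RX, Matrix.mul_sub, Matrix.sub_mul]
  abel

theorem SX_transpose_sub_SX_transpose (hX : X.IsSymm) (hY : Y.IsSymm) :
    (SX A B S X)ᵀ - (SX A B S Y)ᵀ = Bᵀ * (X - Y) * A := by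
  rw [← transpose_sub, SX_sub_SX, transpose_mul, transpose_mul, transpose_transpose,
    transpose_sub, hX.eq, hY.eq, Matrix.mul_assoc]

variable [DecidableEq κ]

theorem SX_mul_mpinv_mul_RX (hR : R.IsSymm) (hX : X.IsSymm) (hker : KerCond A B S R X) :
    SX A B S X * mpinv (RX R B X) * RX R B X = SX A B S X := by
  refine Matrix.toLin'.injective (LinearMap.ext fun v => ?_)
  simp only [toLin'_apply]
  rw [← mulVec_mulVec, ← mulVec_mulVec, ← sub_eq_zero, ← mulVec_sub]
  apply hker
  rw [mulVec_sub, mulVec_mulVec, mulVec_mulVec, (isSymm_RX hR hX).mul_mpinv_mul_self, sub_self]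

theorem RX_mul_mpinv_mul_SX_transpose (hR : R.IsSymm) (hX : X.IsSymm)
    (hker : KerCond A B S R X) :
    RX R B X * mpinv (RX R B X) * (SX A B S X)ᵀ = (SX A B S X)ᵀ := by
  have h := congrArg transpose (SX_mul_mpinv_mul_RX hR hX hker)
  rwa [transpose_mul, transpose_mul, (isSymm_RX hR hX).eq, (isSymm_RX hR hX).isSymm_mpinv.eq,
    ← Matrix.mul_assoc] at h

theorem transpose_AX (hR : R.IsSymm) (hX : X.IsSymm) :
    (AX A B S R X)ᵀ = Aᵀ - SX A B S X * mpinv (RX R B X) * Bᵀ := by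
  rw [AX, KX, transpose_sub, transpose_mul, transpose_mul, transpose_transpose,
    (isSymm_RX hR hX).isSymm_mpinv.eq, Matrix.mul_assoc]

theorem Ricc_sub_Ricc (hR : R.IsSymm) (hX : X.IsSymm) (hY : Y.IsSymm)
    (hkX : KerCond A B S R X) (hkY : KerCond A B S R Y) :
    Ricc A Q B S R X - Ricc A Q B S R Y = (AX A B S R X)ᵀ * (X - Y) * AX A B S R Y := by
  have hSRX := SX_mul_mpinv_mul_RX hR hX hkX
  have hRSY := RX_mul_mpinv_mul_SX_transpose hR hY hkY
  rw [transpose_AX hR hX, AX, KX]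
  set G := mpinv (RX R B X)
  set H := mpinv (RX R B Y)
  have expand : (Aᵀ - SX A B S X * G * Bᵀ) * (X - Y) * (A - B * (H * (SX A B S Y)ᵀ))
      = Aᵀ * (X - Y) * A - (Aᵀ * (X - Y) * B) * H * (SX A B S Y)ᵀ
        - SX A B S X * G * (Bᵀ * (X - Y) * A)
        + SX A B S X * G * (Bᵀ * (X - Y) * B) * H * (SX A B S Y)ᵀ := by
    simp only [Matrix.sub_mul, Matrix.mul_sub, Matrix.mul_assoc]
    abel
  have cancel : SX A B S X * G * (Bᵀ * (X - Y) * B) * H * (SX A B S Y)ᵀ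
      = SX A B S X * H * (SX A B S Y)ᵀ - SX A B S X * G * (SX A B S Y)ᵀ := by
    rw [← RX_sub_RX, Matrix.mul_sub, Matrix.sub_mul, Matrix.sub_mul, hSRX,
      Matrix.mul_assoc _ (RX R B Y), Matrix.mul_assoc _ (RX R B Y * H), hRSY]
  rw [expand, cancel, ← SX_sub_SX (B := B) (S := S),
    ← SX_transpose_sub_SX_transpose (A := A) (S := S) hX hY, Ricc, Ricc]
  simp only [Matrix.sub_mul, Matrix.mul_sub, Matrix.mul_assoc]
  abel

theorem sub_mulVec_eq_zero_of_pow_AX_mulVec_eq_zero [DecidableEq ι] {Xo : Matrix ι ι ℝ}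
    {X : ℕ → Matrix ι ι ℝ} {T : ℕ} (hR : R.IsSymm) (hXo : IsCGDARESolution A Q B S R Xo)
    (hrec : ∀ t < T, X t = Ricc A Q B S R (X (t + 1)))
    (hsymm : ∀ t ≤ T, (X t).IsSymm) (hker : ∀ t ≤ T, KerCond A B S R (X t)) :
    ∀ τ ≤ T, ∀ u, (AX A B S R Xo ^ τ) *ᵥ u = 0 → (X (T - τ) - Xo) *ᵥ u = 0 := by
  obtain ⟨hXoSymm, hXoFixed, hXoKer⟩ := hXo
  intro τ
  induction τ with
  | zero =>
    intro _ u hu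
    rw [pow_zero, one_mulVec] at hu
    rw [hu, mulVec_zero]
  | succ τ ih =>
    intro hτ u hu
    have hstep : X (T - (τ + 1)) - Xo
        = (AX A B S R (X (T - τ)))ᵀ * (X (T - τ) - Xo) * AX A B S R Xo := by
      rw [hrec _ (by omega), show T - (τ + 1) + 1 = T - τ by omega, ← Ricc_sub_Ricc hR
        (hsymm _ (by omega)) hXoSymm (hker _ (by omega)) hXoKer, ← hXoFixed]
    have hAu : (AX A B S R Xo ^ τ) *ᵥ (AX A B S R Xo *ᵥ u) = 0 := by
      rwa [mulVec_mulVec, ← pow_succ]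
    rw [hstep, Matrix.mul_assoc, ← mulVec_mulVec, ← mulVec_mulVec, ih (by omega) _ hAu,
      mulVec_zero]

end Riccati

section KernelStabilisation

variable {K ι : Type*} [Field K] [Fintype ι] [DecidableEq ι]

theorem setOf_pow_mulVec_eq_zero (M : Matrix ι ι K) (k : ℕ) :
    {v | (M ^ k) *ᵥ v = 0} = (LinearMap.ker (toLin' M ^ k) : Set (ι → K)) := by
  ext v
  simp [← toLin'_pow, toLin'_apply]

theorem pow_mulVec_eq_zero_of_sInf_le {M : Matrix ι ι K} {τ : ℕ}
    (hτ : sInf {k : ℕ | {v | (M ^ k) *ᵥ v = 0} = {v | (M ^ (k + 1)) *ᵥ v = 0}} ≤ τ)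
    {u : ι → K} (hu : (M ^ Fintype.card ι) *ᵥ u = 0) : (M ^ τ) *ᵥ u = 0 := by
  simp only [setOf_pow_mulVec_eq_zero, SetLike.coe_set_eq] at hτ
  set f := toLin' M
  set stable := {k : ℕ | LinearMap.ker (f ^ k) = LinearMap.ker (f ^ (k + 1))}
  have hcard : Fintype.card ι ∈ stable := by
    rw [Set.mem_ofPred_eq, ← Module.finrank_fintype_fun_eq_card K]
    exact (Module.End.ker_pow_eq_ker_pow_finrank_of_le (by omega)).symm
  have hinf_mem : sInf stable ∈ stable := Nat.sInf_mem ⟨_, hcard⟩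
  have hinf_le : sInf stable ≤ Fintype.card ι := Nat.sInf_le hcard
  have hker_eq (j : ℕ) (hj : sInf stable ≤ j) :
      LinearMap.ker (f ^ j) = LinearMap.ker (f ^ sInf stable) := by
    rw [Module.End.ker_pow_constant hinf_mem (j - sInf stable), Nat.add_sub_cancel' hj]
  have hmem (j : ℕ) : (M ^ j) *ᵥ u = 0 ↔ u ∈ LinearMap.ker (f ^ j) := by
    simp [f, ← toLin'_pow, toLin'_apply]
  rwa [hmem, hker_eq τ hτ, ← hker_eq _ hinf_le, ← hmem]

end KernelStabilisation

theorem stmt_17_general {n m : ℕ}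
    (A Q : Matrix (Fin n) (Fin n) ℝ) (B S : Matrix (Fin n) (Fin m) ℝ)
    (R : Matrix (Fin m) (Fin m) ℝ)
    (hPi : (fromBlocks Q S Sᵀ R).PosSemidef)
    (Xo : Matrix (Fin n) (Fin n) ℝ) (hXo : IsCGDARESolution A Q B S R Xo)
    (ν : ℕ)
    (hν : ν = sInf {k : ℕ |
      {v : Fin n → ℝ | ((AX A B S R Xo) ^ k).mulVec v = 0} =
        {v : Fin n → ℝ | ((AX A B S R Xo) ^ (k + 1)).mulVec v = 0}})
    (T : ℕ)
    (X : ℕ → Matrix (Fin n) (Fin n) ℝ)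
    (hrec : ∀ t < T, X t = Ricc A Q B S R (X (t + 1)))
    (hsymm : ∀ t ≤ T, (X t)ᵀ = X t)
    (hker : ∀ t ≤ T, KerCond A B S R (X t)) :
    ∀ τ : ℕ, ν ≤ τ → τ ≤ T →
      ∀ u : Fin n → ℝ, ((AX A B S R Xo) ^ n).mulVec u = 0 →
        (X (T - τ) - Xo).mulVec u = 0 := by
  intro τ hντ hτT u hu
  have hR : R.IsSymm :=
    isHermitian_iff_isSymm.mp (isHermitian_fromBlocks_iff.mp hPi.isHermitian).2.2.2
  refine sub_mulVec_eq_zero_of_pow_AX_mulVec_eq_zero hR hXo hrec hsymm hker τ hτT u ?_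
  exact pow_mulVec_eq_zero_of_sInf_le (hν ▸ hντ) (by rwa [Fintype.card_fin])

/-- if `ν` is the nilpotency index of `A_{X∘}`, then for every `ν ≤ τ ≤ T`
the solution of the GRDE with terminal condition `X_T = P` satisfies
`(X_{T-τ} - X∘) u = 0` for all `u ∈ 𝒰 = ker (A_{X∘})^n`. -/
theorem stmt_17 {n m : ℕ} (hn : 0 < n) (hm : 0 < m)
    (A Q : Matrix (Fin n) (Fin n) ℝ) (B S : Matrix (Fin n) (Fin m) ℝ)
    (R : Matrix (Fin m) (Fin m) ℝ)
    (hPi : (fromBlocks Q S Sᵀ R).PosSemidef)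
    (Xo : Matrix (Fin n) (Fin n) ℝ) (hXo : IsCGDARESolution A Q B S R Xo)
    (ν : ℕ)
    (hν : ν = sInf {k : ℕ |
      {v : Fin n → ℝ | ((AX A B S R Xo) ^ k).mulVec v = 0} =
        {v : Fin n → ℝ | ((AX A B S R Xo) ^ (k + 1)).mulVec v = 0}})
    (T : ℕ) (hT : 1 ≤ T)
    (P : Matrix (Fin n) (Fin n) ℝ) (hP : P.PosSemidef)
    (X : ℕ → Matrix (Fin n) (Fin n) ℝ) (hterm : X T = P)
    (hrec : ∀ t < T, X t = Ricc A Q B S R (X (t + 1)))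
    (hsymm : ∀ t ≤ T, (X t)ᵀ = X t)
    (hker : ∀ t ≤ T, KerCond A B S R (X t)) :
    ∀ τ : ℕ, ν ≤ τ → τ ≤ T →
      ∀ u : Fin n → ℝ, ((AX A B S R Xo) ^ n).mulVec u = 0 →
        (X (T - τ) - Xo).mulVec u = 0 :=
  stmt_17_general A Q B S R hPi Xo hXo ν hν T X hrec hsymm hker
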